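/- arXiv:1804.01798 — 4 statements merged into one kernel-verified Lean document; each statement's English description precedes it below -/
import Mathlib

section
/- Let G be a group, let a_1, ..., a_{m+1} be pairwise commuting elements of G (i.e., the subgroup they generate is abelian on these generators: a_i a_j = a_j a_i for all i, j), and let f ∈ G satisfy f a_i f^{-1} = a_{i+1} for i = 1, ..., m. Then for any integers k_1, ..., k_{m+1}, setting K_i = k_1 + ... + k_i, one has a_1^{k_1} a_2^{k_2} ··· a_{m+1}^{k_{m+1}} = [a_1^{K_1} a_2^{K_2} ··· a_m^{K_m}, f] · a_{m+1}^{K_{m+1}}. -/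
/-!
Write `P = ∏_{i<m} a_i ^ K_i`. Conjugation by `f` shifts indices, so `f P f⁻¹ = ∏_{i<m} a_{i+1} ^ K_i`
commutes with `a_0, …, a_{m+1}`. This gives
`⁅P * a_m ^ K_m, f⁆ = ⁅P, f⁆ * a_m ^ K_m * a_{m+1} ^ (-K_m)`, and since `K_{m+1} = K_m + k_{m+1}`
this is the induction step from `m` to `m + 1`.
-/

open scoped commutatorElement

section

variable {G : Type*} [Group G]

theorem commutatorElement_mul_mul_conj {p x f : G} (hx : Commute (f * p * f⁻¹) x)
    (hfx : Commute (f * p * f⁻¹) (f * x * f⁻¹)) :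
    ⁅p * x, f⁆ * (f * x * f⁻¹) = ⁅p, f⁆ * x := by
  calc ⁅p * x, f⁆ * (f * x * f⁻¹)
      = p * x * ((f * x * f⁻¹)⁻¹ * (f * p * f⁻¹)⁻¹ * (f * x * f⁻¹)) := by
        rw [commutatorElement_def]; group
    _ = p * (f * p * f⁻¹)⁻¹ * x := by
        rw [mul_assoc _ _ (f * x * f⁻¹), hfx.inv_left.eq, inv_mul_cancel_left, mul_assoc p,
          mul_assoc p, hx.inv_left.eq]
    _ = ⁅p, f⁆ * x := by rw [commutatorElement_def]; group

theorem conj_list_prod_map_zpow {a : ℕ → G} {f : G} (e : ℕ → ℤ) {s : List ℕ}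
    (h : ∀ i ∈ s, f * a i * f⁻¹ = a (i + 1)) :
    f * (s.map fun i => a i ^ e i).prod * f⁻¹ = (s.map fun i => a (i + 1) ^ e i).prod := by
  induction s with
  | nil => simp
  | cons i s ih =>
    simp only [List.forall_mem_cons] at h
    simp only [List.map_cons, List.prod_cons, ← conj_mul, ← conj_zpow, h.1, ih h.2]

theorem commute_list_prod_map_zpow {ι : Type*} {a : ι → G} {x : G} (e : ι → ℤ) {s : List ι}
    (h : ∀ i ∈ s, Commute x (a i)) : Commute x (s.map fun i => a i ^ e i).prod :=
  Commute.list_prod_right _ _ <| by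
    simpa only [List.forall_mem_map] using fun i hi => (h i hi).zpow_right (e i)

end

theorem prod_powers_eq_commutator_mul {G : Type*} [Group G] (m : ℕ) (a : ℕ → G) (f : G)
    (hcomm : ∀ i j, i ≤ m → j ≤ m → a i * a j = a j * a i)
    (hconj : ∀ i, i < m → f * a i * f⁻¹ = a (i + 1))
    (k : ℕ → ℤ) :
    ((List.range (m + 1)).map (fun i => a i ^ k i)).prod =
      ⁅((List.range m).map (fun i => a i ^ (∑ j ∈ Finset.range (i + 1), k j))).prod, f⁆ *
        a m ^ (∑ j ∈ Finset.range (m + 1), k j) := by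
  induction m with
  | zero => simp [commutatorElement_def]
  | succ n ih =>
    set K : ℕ → ℤ := fun i => ∑ j ∈ Finset.range (i + 1), k j
    set P := ((List.range n).map fun i => a i ^ K i).prod
    have hfP : f * P * f⁻¹ = ((List.range n).map fun i => a (i + 1) ^ K i).prod :=
      conj_list_prod_map_zpow K fun i hi => hconj i (by grind)
    have hfa : f * a n ^ K n * f⁻¹ = a (n + 1) ^ K n := by rw [← conj_zpow, hconj n n.lt_succ_self]
    have hcommP : ∀ j ≤ n + 1, Commute (f * P * f⁻¹) (a j ^ K n) := fun j hj => by
      rw [hfP]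
      exact (commute_list_prod_map_zpow (a := fun i => a (i + 1)) K fun i hi =>
        Commute.zpow_left (hcomm j (i + 1) hj (by grind)) (K n)).symm
    have hK : K (n + 1) = K n + k (n + 1) := Finset.sum_range_succ k (n + 1)
    calc ((List.range (n + 1 + 1)).map fun i => a i ^ k i).prod
        = ((List.range (n + 1)).map fun i => a i ^ k i).prod * a (n + 1) ^ k (n + 1) := by
          simp [List.range_succ, mul_assoc]
      _ = ⁅P, f⁆ * a n ^ K n * a (n + 1) ^ k (n + 1) := by
          rw [ih (fun i j hi hj => hcomm i j (by omega) (by omega)) fun i hi => hconj i (by omega)]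
      _ = ⁅P * a n ^ K n, f⁆ * a (n + 1) ^ K (n + 1) := by
          rw [hK, zpow_add, ← mul_assoc, ← hfa, commutatorElement_mul_mul_conj
            (hcommP n (by omega)) (hfa ▸ hcommP (n + 1) le_rfl)]
      _ = _ := by simp [P, K, List.range_succ]
end

section
/- Let G be a group, let a_1, ..., a_{m+1} be pairwise commuting elements of G, and let f ∈ G satisfy f a_i f^{-1} = a_{i+1} for i = 1, ..., m. Then for any integers k_1, ..., k_{m+1}, with K_i = k_1 + ... + k_i, one has a_1^{k_1} a_2^{k_2} ··· a_{m+1}^{k_{m+1}} = a_{m+1}^{K_{m+1}} · [f, a_1^{-K_1} a_2^{-K_2} ··· a_m^{-K_m}]. -/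
/-!
Write `P = ∏_{i<m} a_i^{-K_i}`. Then `⁅f, P⁆ = (f P f⁻¹) P⁻¹`, and conjugation by `f` shifts
every `a_i` to `a_{i+1}`. What remains is an identity between powers of the `a_i`, which holds
in the abelian subgroup they generate: there `a_m^{K_m} ∏_{i<m} a_{i+1}^{-K_i} ∏_{i<m} a_i^{K_i}`
contains each `a_i` with exponent `K_i - K_{i-1} = k_i`.
-/

open scoped commutatorElement

theorem list_prod_zpow_eq_zpow_mul_shift_mul_inv {H : Type*} [CommGroup H] (b : ℕ → H)
    (k : ℕ → ℤ) (m : ℕ) :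
    ((List.range (m + 1)).map fun i => b i ^ k i).prod =
      b m ^ (∑ j ∈ Finset.range (m + 1), k j) *
        (((List.range m).map fun i => b (i + 1) ^ (-∑ j ∈ Finset.range (i + 1), k j)).prod *
          ((List.range m).map fun i => b i ^ (-∑ j ∈ Finset.range (i + 1), k j)).prod⁻¹) := by
  induction m with
  | zero => simp
  | succ m ih =>
    rw [List.range_succ, List.map_append, List.prod_append, ih, List.range_succ,
      Finset.sum_range_succ _ (m + 1)]
    simp only [List.map_append, List.map_singleton, List.prod_append, List.prod_singleton,
      zpow_add, zpow_neg, mul_inv_rev, inv_inv]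
    simp only [mul_comm, mul_left_comm, mul_assoc, mul_inv_cancel_left]

open scoped IsMulCommutative in
theorem list_prod_zpow_eq_zpow_mul_shift_mul_inv_of_commute {G : Type*} [Group G] (a : ℕ → G)
    (k : ℕ → ℤ) (m : ℕ) (hcomm : ∀ i j, i ≤ m → j ≤ m → Commute (a i) (a j)) :
    ((List.range (m + 1)).map fun i => a i ^ k i).prod =
      a m ^ (∑ j ∈ Finset.range (m + 1), k j) *
        (((List.range m).map fun i => a (i + 1) ^ (-∑ j ∈ Finset.range (i + 1), k j)).prod *
          ((List.range m).map fun i => a i ^ (-∑ j ∈ Finset.range (i + 1), k j)).prod⁻¹) := by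
  set H := Subgroup.closure (a '' Set.Iic m)
  have : IsMulCommutative H := Subgroup.isMulCommutative_closure <| by
    rintro _ ⟨i, hi, rfl⟩ _ ⟨j, hj, rfl⟩
    exact hcomm i j hi hj
  -- `a i` need not lie in `H` for `i > m`, so `b` clamps the index.
  let b : ℕ → H := fun i => ⟨a (min i m), Subgroup.subset_closure ⟨_, min_le_right i m, rfl⟩⟩
  have hb : ∀ i ≤ m, (b i : G) = a i := fun i hi => congrArg a (min_eq_left hi)
  have lift : ∀ (n : ℕ) (s : ℕ → ℕ) (e : ℕ → ℤ), (∀ i < n, s i ≤ m) →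
      ((List.range n).map fun i => a (s i) ^ e i).prod =
        (((List.range n).map fun i => b (s i) ^ e i).prod : G) := by
    intro n s e hs
    rw [Subgroup.val_list_prod, List.map_map]
    refine congrArg List.prod (List.map_congr_left fun i hi => ?_)
    rw [Function.comp_apply, Subgroup.coe_zpow, hb _ (hs i (List.mem_range.mp hi))]
  rw [lift (m + 1) (fun i => i) k (fun i hi => Nat.le_of_lt_succ hi),
    lift m (· + 1) _ (fun i hi => hi), lift m (fun i => i) _ (fun i hi => hi.le), ← hb m le_rfl,
    list_prod_zpow_eq_zpow_mul_shift_mul_inv b k m]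
  simp only [Subgroup.coe_mul, Subgroup.coe_inv, Subgroup.coe_zpow]

theorem conj_list_prod_zpow_eq_shift {G : Type*} [Group G] (f : G) (a : ℕ → G) (e : ℕ → ℤ)
    (n : ℕ) (hconj : ∀ i < n, f * a i * f⁻¹ = a (i + 1)) :
    f * ((List.range n).map fun i => a i ^ e i).prod * f⁻¹ =
      ((List.range n).map fun i => a (i + 1) ^ e i).prod := by
  rw [← MulAut.conj_apply, map_list_prod, List.map_map]
  refine congrArg List.prod (List.map_congr_left fun i hi => ?_)
  rw [Function.comp_apply, map_zpow, MulAut.conj_apply, hconj i (List.mem_range.mp hi)]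

theorem prod_powers_eq_mul_commutator {G : Type*} [Group G] (m : ℕ) (a : ℕ → G) (f : G)
    (hcomm : ∀ i j, i ≤ m → j ≤ m → a i * a j = a j * a i)
    (hconj : ∀ i, i < m → f * a i * f⁻¹ = a (i + 1))
    (k : ℕ → ℤ) :
    ((List.range (m + 1)).map (fun i => a i ^ k i)).prod =
      a m ^ (∑ j ∈ Finset.range (m + 1), k j) *
        ⁅f, ((List.range m).map (fun i => a i ^ (-(∑ j ∈ Finset.range (i + 1), k j)))).prod⁆ := by
  rw [commutatorElement_def, conj_list_prod_zpow_eq_shift f a _ m hconj]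
  exact list_prod_zpow_eq_zpow_mul_shift_mul_inv_of_commute a k m hcomm
end

section
/- Let G be a group and let h_1, g_1, ..., h_k, g_k ∈ G. Then for any positive integer n, the n-th power ([h_1,g_1][h_2,g_2]···[h_k,g_k])^n can be written as a product of n(k-1) + ⌊n/2⌋ + 1 commutators in G. -/
open scoped commutatorElement

section BavardAux

variable {G : Type*} [Group G]

/-- `x` is a product of exactly `m` commutators. -/
private def IsPC (m : ℕ) (x : G) : Prop :=
  ∃ l : List (G × G), l.length = m ∧ x = (l.map fun p => ⁅p.1, p.2⁆).prod

private lemma isPC_one : IsPC 0 (1 : G) := ⟨[], rfl, rfl⟩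

private lemma isPC_comm (a b : G) : IsPC 1 ⁅a, b⁆ :=
  ⟨[(a, b)], rfl, by simp⟩

private lemma isPC_mul {m n : ℕ} {x y : G} (hx : IsPC m x) (hy : IsPC n y) :
    IsPC (m + n) (x * y) := by
  obtain ⟨l, hl, rfl⟩ := hx
  obtain ⟨l', hl', rfl⟩ := hy
  exact ⟨l ++ l', by simp [hl, hl'], by simp⟩

private lemma isPC_mono {m n : ℕ} (hmn : m ≤ n) {x : G} (hx : IsPC m x) : IsPC n x := by
  obtain ⟨l, hl, rfl⟩ := hx
  refine ⟨l ++ List.replicate (n - m) ((1 : G), (1 : G)), by simp [hl]; omega, ?_⟩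
  simp [commutatorElement_def]

private lemma conj_prod (g : G) :
    ∀ l : List (G × G),
      g * (l.map fun p => ⁅p.1, p.2⁆).prod * g⁻¹ =
        ((l.map fun p => (g * p.1 * g⁻¹, g * p.2 * g⁻¹)).map fun p => ⁅p.1, p.2⁆).prod := by
  intro l
  induction l with
  | nil => simp
  | cons p t ih =>
    simp only [List.map_cons, List.prod_cons]
    have hc : ⁅g * p.1 * g⁻¹, g * p.2 * g⁻¹⁆ = g * ⁅p.1, p.2⁆ * g⁻¹ := by
      simp only [commutatorElement_def]; group
    rw [hc, ← ih]; group

private lemma isPC_conj {m : ℕ} {x : G} (hx : IsPC m x) (g : G) :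
    IsPC m (g * x * g⁻¹) := by
  obtain ⟨l, hl, rfl⟩ := hx
  exact ⟨l.map fun p => (g * p.1 * g⁻¹, g * p.2 * g⁻¹), by simp [hl], conj_prod g l⟩

/-- Free identity: the master step producing an odd power from `E m`. -/
private lemma master (a b c : G) :
    ⁅a, b⁆ * (c * c) =
      (a * ⁅b, a⁻¹ * b⁻¹ * c * b⁆ * a⁻¹) * (b⁻¹ * c * b * c) := by
  simp only [commutatorElement_def]; group

/-- Step identity: uses only that `c` commutes with `⁅a,b⁆`. -/
private lemma step (a b c : G) (hcomm : ⁅a, b⁆ * c = c * ⁅a, b⁆) :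
    b⁻¹ * (⁅a, b⁆ * c) * b * (⁅a, b⁆ * c) =
      ⁅b⁻¹ * c * (a * b⁻¹) * c⁻¹ * b, b⁻¹ * c * (b * b) * c⁻¹ * b⁆ *
        (b⁻¹ * c * b * c) := by
  have key : ⁅a, b⁆ * c * (b * ⁅a, b⁆) = c * (a * b * (b * (a⁻¹ * b⁻¹))) := by
    rw [hcomm]
    simp only [commutatorElement_def]; group
  calc b⁻¹ * (⁅a, b⁆ * c) * b * (⁅a, b⁆ * c)
      = b⁻¹ * (⁅a, b⁆ * c * (b * ⁅a, b⁆)) * c := by group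
    _ = b⁻¹ * (c * (a * b * (b * (a⁻¹ * b⁻¹)))) * c := by rw [key]
    _ = _ := by simp only [commutatorElement_def]; group

private lemma E_pc (a b : G) : ∀ m : ℕ, IsPC m (b⁻¹ * ⁅a, b⁆ ^ m * b * ⁅a, b⁆ ^ m)
  | 0 => by simpa using (isPC_one : IsPC 0 (1 : G))
  | (m + 1) => by
    have hcomm : ⁅a, b⁆ * ⁅a, b⁆ ^ m = ⁅a, b⁆ ^ m * ⁅a, b⁆ := by
      rw [← pow_succ']; exact pow_succ _ _
    have hstep := step a b (⁅a, b⁆ ^ m) hcomm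
    have h2 : b⁻¹ * ⁅a, b⁆ ^ (m + 1) * b * ⁅a, b⁆ ^ (m + 1) =
        b⁻¹ * (⁅a, b⁆ * ⁅a, b⁆ ^ m) * b * (⁅a, b⁆ * ⁅a, b⁆ ^ m) := by
      rw [pow_succ']
    rw [h2, hstep]
    exact (by omega : 1 + m = m + 1) ▸
      isPC_mul (isPC_comm _ _) (E_pc a b m)

private lemma odd_pc (a b : G) (m : ℕ) : IsPC (m + 1) (⁅a, b⁆ ^ (2 * m + 1)) := by
  have hp : ⁅a, b⁆ ^ (2 * m + 1) = ⁅a, b⁆ * (⁅a, b⁆ ^ m * ⁅a, b⁆ ^ m) := by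
    rw [two_mul, pow_succ', pow_add]
  rw [hp, master a b (⁅a, b⁆ ^ m)]
  exact (by omega : 1 + m = m + 1) ▸
    isPC_mul (isPC_conj (isPC_comm b (a⁻¹ * b⁻¹ * ⁅a, b⁆ ^ m * b)) a) (E_pc a b m)

private lemma pow_pc (a b : G) (n : ℕ) : IsPC (n / 2 + 1) (⁅a, b⁆ ^ n) := by
  rcases n with _ | n
  · simp only [pow_zero]
    exact isPC_mono (by omega) isPC_one
  · rcases Nat.even_or_odd n with ⟨m, hm⟩ | ⟨m, hm⟩
    · have h1 : n + 1 = 2 * m + 1 := by omega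
      rw [h1]
      exact (by omega : m + 1 = (2 * m + 1) / 2 + 1) ▸ odd_pc a b m
    · have h1 : n + 1 = (2 * m + 1) + 1 := by omega
      rw [h1, pow_succ]
      exact (by omega : (m + 1) + 1 = ((2 * m + 1) + 1) / 2 + 1) ▸
        isPC_mul (odd_pc a b m) (isPC_comm a b)

private lemma geom (x y : G) {r : ℕ} (hy : IsPC r y) :
    ∀ n : ℕ, IsPC (n * r) ((x ^ n)⁻¹ * (x * y) ^ n)
  | 0 => by simpa using (isPC_one : IsPC 0 (1 : G))
  | (n + 1) => by
    have hsplit : (x ^ (n + 1))⁻¹ * (x * y) ^ (n + 1) =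
        ((x ^ n)⁻¹ * y * ((x ^ n)⁻¹)⁻¹) * ((x ^ n)⁻¹ * (x * y) ^ n) := by
      conv_lhs => rw [pow_succ' (x * y) n]
      generalize (x * y) ^ n = z
      group
    rw [hsplit]
    exact (by ring : r + n * r = (n + 1) * r) ▸
      isPC_mul (isPC_conj hy ((x ^ n)⁻¹)) (geom x y hy n)

private lemma isPC_ofFn {k : ℕ} (c d : Fin k → G) :
    IsPC k (List.ofFn fun i => ⁅c i, d i⁆).prod := by
  refine ⟨List.ofFn fun i => (c i, d i), by simp, ?_⟩
  rw [List.map_ofFn]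
  rfl

private lemma isPC_to_fin {N : ℕ} {x : G} (hx : IsPC N x) :
    ∃ c d : Fin N → G, x = (List.ofFn fun i => ⁅c i, d i⁆).prod := by
  obtain ⟨l, hl, rfl⟩ := hx
  subst hl
  refine ⟨fun i => (l.get i).1, fun i => (l.get i).2, ?_⟩
  have h2 : (List.ofFn fun i => ⁅(l.get i).1, (l.get i).2⁆) =
      l.map fun p => ⁅p.1, p.2⁆ := by
    conv_rhs => rw [← List.ofFn_get l]
    rw [List.map_ofFn]
    rfl
  rw [h2]

end BavardAux

theorem bavard_power_of_product_of_commutators {G : Type*} [Group G] (k : ℕ)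
    (h g : Fin k → G) (n : ℕ) (hn : 1 ≤ n) :
    ∃ c d : Fin (n * (k - 1) + n / 2 + 1) → G,
      ((List.ofFn (fun i : Fin k => ⁅h i, g i⁆)).prod) ^ n =
        (List.ofFn (fun i => ⁅c i, d i⁆)).prod := by
  rcases k with _ | k
  · rw [List.ofFn_zero, List.prod_nil, one_pow]
    exact isPC_to_fin (isPC_mono (Nat.zero_le _) isPC_one)
  · rw [List.ofFn_succ, List.prod_cons]
    have hyPC : IsPC k (List.ofFn fun i : Fin k => ⁅h i.succ, g i.succ⁆).prod :=
      isPC_ofFn _ _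
    have hsplit : (⁅h 0, g 0⁆ * (List.ofFn fun i : Fin k => ⁅h i.succ, g i.succ⁆).prod) ^ n =
        ⁅h 0, g 0⁆ ^ n * ((⁅h 0, g 0⁆ ^ n)⁻¹ *
          (⁅h 0, g 0⁆ * (List.ofFn fun i : Fin k => ⁅h i.succ, g i.succ⁆).prod) ^ n) := by
      group
    have hPC : IsPC ((n / 2 + 1) + n * k)
        ((⁅h 0, g 0⁆ * (List.ofFn fun i : Fin k => ⁅h i.succ, g i.succ⁆).prod) ^ n) := by
      rw [hsplit]
      exact isPC_mul (pow_pc (h 0) (g 0) n) (geom _ _ hyPC n)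
    have hcount : (n / 2 + 1) + n * k = n * (k + 1 - 1) + n / 2 + 1 := by
      rw [Nat.add_sub_cancel]; ring
    exact isPC_to_fin (hcount ▸ hPC)
end

section
/- Let G be a group, r ∈ G, and a_1, ..., a_k pairwise commuting elements with r a_j r^{-1} = a_{j+1} for j = 1, ..., k-1 and r a_k r^{-1} = a_1. Then for any integer n, the product a_1^n a_2^n ··· a_k^n equals [A, r] · a_k^{kn} where A = a_1^{n} a_2^{2n} ··· a_{k-1}^{(k-1)n}, and consequently a_1^n a_2^n ··· a_k^n · a_k^{-kn} is a single commutator. -/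
/-!
Put `A = ∏_{i < k-1} a_i ^ ((i+1) n)`. Conjugation by `r` shifts the indices, so
`r A r⁻¹ = ∏_{1 ≤ j < k} a_j ^ (j n)`. Since the `a_j` commute, `⁅A, r⁆ = A (r A r⁻¹)⁻¹` carries the
exponent `(j+1) n - j n = n` at every `a_j` with `j < k - 1` and `-(k-1) n` at `a_{k-1}`, so
multiplying by `a_{k-1} ^ (k n)` gives `∏_{j < k} a_j ^ n`.
-/

open scoped commutatorElement

/-- The exponent `(i + 1) * n` splits as `n + i * n`; the factor `a 0 ^ (0 * n)` of the second
product is trivial, so it runs over the shifted indices. -/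
theorem prod_range_zpow_succ_mul {G : Type*} [Group G] (a : ℕ → G) (n : ℤ) (m : ℕ)
    (hcomm : ∀ i j, i ≤ m → j ≤ m → Commute (a i) (a j)) :
    ((List.range (m + 1)).map fun i => a i ^ ((i + 1 : ℤ) * n)).prod =
      ((List.range (m + 1)).map fun i => a i ^ n).prod *
        ((List.range m).map fun i => a (i + 1) ^ ((i + 1 : ℤ) * n)).prod := by
  induction m with
  | zero => simp
  | succ m ih =>
    set S := ((List.range m).map fun i => a (i + 1) ^ ((i + 1 : ℤ) * n)).prod
    have hS : Commute S (a (m + 1) ^ n) := by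
      refine (Commute.list_prod_left _ _ fun x hx => ?_).zpow_right n
      obtain ⟨i, hi, rfl⟩ := List.mem_map.mp hx
      exact (hcomm _ _ (by simp at hi; omega) le_rfl).zpow_left _
    rw [List.prod_range_succ, ih fun i j hi hj => hcomm i j (by omega) (by omega),
      List.prod_range_succ (fun i => a i ^ n) (m + 1),
      List.prod_range_succ (fun i => a (i + 1) ^ ((i + 1 : ℤ) * n)) m, Nat.cast_succ,
      show ((m : ℤ) + 1 + 1) * n = n + (m + 1) * n by ring, zpow_add, mul_assoc _ S,
      ← mul_assoc S, hS.eq]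
    simp only [S, mul_assoc]

theorem prod_powers_cyclic_eq_commutator_mul_general {G : Type*} [Group G] (k : ℕ)
    (a : ℕ → G) (r : G)
    (hcomm : ∀ i j, i < k → j < k → a i * a j = a j * a i)
    (hconj : ∀ j, j + 1 < k → r * a j * r⁻¹ = a (j + 1))
    (n : ℤ) :
    ((List.range k).map (fun i => a i ^ n)).prod =
      ⁅((List.range (k - 1)).map (fun i => a i ^ ((i + 1 : ℤ) * n))).prod, r⁆ *
        a (k - 1) ^ ((k : ℤ) * n) ∧
    ∃ u v : G,
      ((List.range k).map (fun i => a i ^ n)).prod * a (k - 1) ^ (-((k : ℤ) * n)) = ⁅u, v⁆ := by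
  obtain _ | m := k
  · exact ⟨by simp, 1, 1, by simp⟩
  simp only [Nat.add_sub_cancel]
  push_cast
  set P := ((List.range (m + 1)).map fun i => a i ^ n).prod
  set Q := ((List.range m).map fun i => a i ^ ((i + 1 : ℤ) * n)).prod
  set S := ((List.range m).map fun i => a (i + 1) ^ ((i + 1 : ℤ) * n)).prod
  set x := a m ^ (((m : ℤ) + 1) * n)
  have hcomm' : ∀ i j, i ≤ m → j ≤ m → Commute (a i) (a j) :=
    fun i j hi hj => hcomm i j (by omega) (by omega)
  have hconjQ : r * Q * r⁻¹ = S := by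
    rw [← MulAut.conj_apply, map_list_prod, List.map_map]
    refine congrArg List.prod (List.map_congr_left fun i hi => ?_)
    simp only [Function.comp_apply, map_zpow, MulAut.conj_apply]
    rw [hconj i (by simp at hi; omega)]
  have hQx : Q * x = P * S := by
    rw [← List.prod_range_succ (fun i => a i ^ ((i + 1 : ℤ) * n))]
    exact prod_range_zpow_succ_mul a n m hcomm'
  have hSx : Commute S x := by
    refine (Commute.list_prod_left _ _ fun y hy => ?_).zpow_right _
    obtain ⟨i, hi, rfl⟩ := List.mem_map.mp hy
    exact (hcomm' _ _ (by simp at hi; omega) le_rfl).zpow_left _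
  have key : P = ⁅Q, r⁆ * x := calc
    P = Q * x * S⁻¹ := by rw [hQx, mul_inv_cancel_right]
    _ = Q * (r * Q * r⁻¹)⁻¹ * x := by rw [hconjQ, mul_assoc, ← hSx.inv_left.eq, ← mul_assoc]
    _ = ⁅Q, r⁆ * x := by rw [commutatorElement_def]; group
  exact ⟨key, Q, r, by rw [key, zpow_neg, mul_inv_cancel_right]⟩

theorem prod_powers_cyclic_eq_commutator_mul {G : Type*} [Group G] (k : ℕ) (hk : 1 ≤ k)
    (a : ℕ → G) (r : G)
    (hcomm : ∀ i j, i < k → j < k → a i * a j = a j * a i)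
    (hconj : ∀ j, j + 1 < k → r * a j * r⁻¹ = a (j + 1))
    (hwrap : r * a (k - 1) * r⁻¹ = a 0)
    (n : ℤ) :
    ((List.range k).map (fun i => a i ^ n)).prod =
      ⁅((List.range (k - 1)).map (fun i => a i ^ ((i + 1 : ℤ) * n))).prod, r⁆ *
        a (k - 1) ^ ((k : ℤ) * n) ∧
    ∃ u v : G,
      ((List.range k).map (fun i => a i ^ n)).prod * a (k - 1) ^ (-((k : ℤ) * n)) = ⁅u, v⁆ :=
  prod_powers_cyclic_eq_commutator_mul_general k a r hcomm hconj n
end
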